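/- The coefficients $c_g$ of $\prod_{n \ge 1}(1-q^n)^{-24}$ satisfy $c_g \equiv 0 \pmod 9$ for all $g \equiv 2 \pmod 3$. -/

import Mathlib

open PowerSeries Finset

/-- Integer power of a power series over `ℚ`, using the power-series inverse
for negative exponents. -/
noncomputable def zp (f : PowerSeries ℚ) (n : ℤ) : PowerSeries ℚ :=
  if 0 ≤ n then f ^ n.toNat else f⁻¹ ^ (-n).toNat

/-- The coefficient `w_g` of `∏_{r ≥ 1} (1+q^r)^{-e} · ∏_{s ≥ 1} (1-q^{2s})^{-(24-e)/2}`.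
Since each factor with index `> g` is `1 + O(q^{g+1})`, the coefficient of `q^g`
equals that of the product truncated at index `g`. -/
noncomputable def W (e : ℤ) (g : ℕ) : ℚ :=
  PowerSeries.coeff g
    ((∏ r ∈ Icc 1 g, zp (1 + PowerSeries.X ^ r) (-e)) *
     (∏ s ∈ Icc 1 g, zp (1 - PowerSeries.X ^ (2 * s)) (-((24 - e) / 2))))

/-- The coefficient `c_g` of the Yau–Zaslow series `∏_{s ≥ 1} (1-q^s)^{-24}`. -/
noncomputable def C (g : ℕ) : ℚ :=
  PowerSeries.coeff g (∏ s ∈ Icc 1 g, ((1 - PowerSeries.X ^ s)⁻¹) ^ 24)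

/-!
Let `χ` be the nontrivial character modulo 3 and `L = ∑ χ(n) qⁿ = (q - q²) / (1 - q³)`. Then
`(1 - q)³ = (1 - q³)(1 - 3L)` exactly, and since `(1 - 3y)³ ≡ 1 (mod 9)` this gives
`(1 - q)⁻²⁴ ≡ (1 - q³)⁻⁸ (1 - 3L) (mod 9)`. Substituting `q ↦ qˢ` and multiplying over `s`,
`∏ (1 - qˢ)⁻²⁴ ≡ F(q³) (1 - 3 ∑ₛ L(qˢ)) (mod 9)`. The `qⁿ`-coefficient of `∑ₛ L(qˢ)` is
`∑_{d ∣ n} χ(d)`, which vanishes for `n ≡ 2 (mod 3)` because then `χ(d) = -χ(n / d)`; since `F(q³)`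
only involves exponents divisible by 3, the `q^g`-coefficient vanishes modulo 9 for `g ≡ 2 (mod 3)`.
-/

def chi3 (n : ℕ) : ℤ := if n % 3 = 1 then 1 else if n % 3 = 2 then -1 else 0

lemma chi3_add_chi3_div_eq_zero {n d : ℕ} (hn : n % 3 = 2) (hd : d ∣ n) :
    chi3 d + chi3 (n / d) = 0 := by
  obtain ⟨e, rfl⟩ := hd
  have hd : d ≠ 0 := by rintro rfl; simp at hn
  rw [Nat.mul_div_cancel_left e (Nat.pos_of_ne_zero hd)]
  have hde := Nat.mul_mod d e 3
  have := Nat.mod_lt d three_pos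
  have := Nat.mod_lt e three_pos
  unfold chi3
  interval_cases hd3 : d % 3 <;> interval_cases he3 : e % 3 <;> simp_all

lemma sum_divisors_chi3_eq_zero {n : ℕ} (hn : n % 3 = 2) : ∑ d ∈ n.divisors, chi3 d = 0 := by
  have h : 2 * ∑ d ∈ n.divisors, chi3 d = 0 := by
    calc 2 * ∑ d ∈ n.divisors, chi3 d
        = ∑ d ∈ n.divisors, chi3 d + ∑ d ∈ n.divisors, chi3 (n / d) := by
          rw [Nat.sum_div_divisors, two_mul]
      _ = 0 := by
          rw [← sum_add_distrib]
          exact sum_eq_zero fun d hd => chi3_add_chi3_div_eq_zero hn (Nat.dvd_of_mem_divisors hd)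
  omega

variable {R : Type*} [CommRing R]

variable (R) in
noncomputable def chiSeries : R⟦X⟧ := mk fun n => (chi3 n : R)

lemma one_sub_X_pow_three_mul_chiSeries : (1 - X ^ 3) * chiSeries R = X - X ^ 2 := by
  ext n
  rw [sub_mul, one_mul, map_sub, map_sub, coeff_X_pow_mul', coeff_X, coeff_X_pow]
  simp only [chiSeries, coeff_mk]
  rcases lt_or_ge n 3 with h | h
  · interval_cases n <;> simp [chi3]
  · obtain ⟨m, rfl⟩ := Nat.exists_eq_add_of_le' h
    simp [chi3, Nat.add_mod_right]

lemma one_sub_X_cubed : (1 - X) ^ 3 = (1 - X ^ 3) * (1 - 3 * chiSeries R) := by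
  linear_combination (3 : R⟦X⟧) * one_sub_X_pow_three_mul_chiSeries (R := R)

lemma one_sub_three_mul_pow_three {A : Type*} [CommRing A] (h9 : (9 : A) = 0) (y : A) :
    (1 - 3 * y) ^ 3 = 1 := by
  linear_combination (-y + 3 * y ^ 2 - 3 * y ^ 3) * h9

lemma prod_one_sub_three_mul {A ι : Type*} [CommRing A] (h9 : (9 : A) = 0) (t : Finset ι)
    (f : ι → A) : ∏ i ∈ t, (1 - 3 * f i) = 1 - 3 * ∑ i ∈ t, f i := by
  classical
  induction t using Finset.induction_on with
  | empty => simp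
  | insert i t hi ih =>
    rw [prod_insert hi, sum_insert hi, ih]
    linear_combination f i * (∑ j ∈ t, f j) * h9

lemma expand_comm (p q : ℕ) (hp : p ≠ 0) (hq : q ≠ 0) (φ : R⟦X⟧) :
    expand p hp (expand q hq φ) = expand q hq (expand p hp φ) := by
  simp only [← expand_mul, mul_comm]

lemma mk_one_pow_twentyFour (h9 : (9 : R) = 0) :
    (PowerSeries.mk 1 : R⟦X⟧) ^ 24 =
      expand 3 three_ne_zero (PowerSeries.mk 1 ^ 8) * (1 - 3 * chiSeries R) := by
  have h9' : (9 : R⟦X⟧) = 0 := by rw [← map_ofNat PowerSeries.C 9, h9, map_zero]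
  set a : R⟦X⟧ := mk 1
  set w := 1 - 3 * chiSeries R
  have hau : a * (1 - X) = 1 := mk_one_mul_one_sub_eq_one R
  have hbv : expand 3 three_ne_zero a * (1 - X ^ 3) = 1 := by
    simpa using congrArg (expand 3 three_ne_zero) hau
  rw [map_pow]
  set b := expand 3 three_ne_zero a
  calc a ^ 24 = a ^ 24 * (b * (1 - X ^ 3)) ^ 8 * (w ^ 3) ^ 3 := by
        rw [hbv, one_sub_three_mul_pow_three h9']; ring
    _ = b ^ 8 * w * (a ^ 24 * ((1 - X ^ 3) * w) ^ 8) := by ring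
    _ = b ^ 8 * w * (a * (1 - X)) ^ 24 := by rw [← one_sub_X_cubed]; ring
    _ = b ^ 8 * w := by rw [hau]; ring

lemma subst_X_pow_mk_one_pow_twentyFour (h9 : (9 : R) = 0) {s : ℕ} (hs : s ≠ 0) :
    ((PowerSeries.mk 1 : R⟦X⟧).subst (X ^ s : R⟦X⟧)) ^ 24 =
      expand 3 three_ne_zero (((PowerSeries.mk 1 : R⟦X⟧).subst (X ^ s : R⟦X⟧)) ^ 8) *
        (1 - 3 * (chiSeries R).subst (X ^ s : R⟦X⟧)) := by
  simp only [← expand_apply s hs, ← map_pow, mk_one_pow_twentyFour h9, map_mul, map_sub,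
    map_one, map_ofNat, expand_comm]

lemma coeff_expand_mul_eq_zero {p : ℕ} (hp : p ≠ 0) (φ ψ : R⟦X⟧) {n : ℕ}
    (hψ : ∀ j ≤ n, p ∣ n - j → coeff j ψ = 0) : coeff n (expand p hp φ * ψ) = 0 := by
  rw [coeff_mul]
  refine sum_eq_zero fun ⟨i, j⟩ hij => ?_
  rw [HasAntidiagonal.mem_antidiagonal] at hij
  by_cases hi : p ∣ i
  · rw [hψ j (by omega) (by rwa [show n - j = i by omega]), mul_zero]
  · rw [coeff_expand_of_not_dvd p hp φ hi, zero_mul]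

lemma sum_Icc_ite_dvd {M : Type*} [AddCommMonoid M] {n g : ℕ} (hn : n ≠ 0) (hng : n ≤ g)
    (f : ℕ → M) : ∑ s ∈ Icc 1 g, (if s ∣ n then f s else 0) = ∑ d ∈ n.divisors, f d := by
  rw [← sum_filter]
  congr 1
  ext d
  simp only [mem_filter, mem_Icc, Nat.mem_divisors]
  constructor
  · rintro ⟨-, hd⟩
    exact ⟨hd, hn⟩
  · rintro ⟨hd, -⟩
    have hn' := Nat.pos_of_ne_zero hn
    exact ⟨⟨Nat.pos_of_dvd_of_pos hd hn', (Nat.le_of_dvd hn' hd).trans hng⟩, hd⟩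

lemma coeff_sum_subst_chiSeries_eq_zero {n g : ℕ} (hn : n % 3 = 2) (hng : n ≤ g) :
    coeff n (∑ s ∈ Icc 1 g, (chiSeries R).subst (X ^ s : R⟦X⟧)) = 0 := by
  have hterm : ∀ s ∈ Icc 1 g, coeff n ((chiSeries R).subst (X ^ s : R⟦X⟧)) =
      if s ∣ n then ((chi3 (n / s) : ℤ) : R) else 0 := fun s hs => by
    rw [← expand_apply s (by simp at hs; omega), coeff_expand]
    simp [chiSeries]
  rw [map_sum, sum_congr rfl hterm, sum_Icc_ite_dvd (by omega) hng, ← Int.cast_sum,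
    Nat.sum_div_divisors, sum_divisors_chi3_eq_zero hn, Int.cast_zero]

lemma map_subst_X_pow_mk_one {S : Type*} [CommRing S] (f : R →+* S) {s : ℕ} (hs : s ≠ 0) :
    map f ((PowerSeries.mk 1 : R⟦X⟧).subst (X ^ s : R⟦X⟧)) =
      (PowerSeries.mk 1 : S⟦X⟧).subst (X ^ s : S⟦X⟧) := by
  rw [← expand_apply s hs, ← expand_apply s hs, map_expand]
  congr 1
  ext n
  simp

lemma inv_one_sub_X_pow {k : Type*} [Field k] {s : ℕ} (hs : s ≠ 0) :
    (1 - X ^ s : k⟦X⟧)⁻¹ = (PowerSeries.mk 1 : k⟦X⟧).subst (X ^ s : k⟦X⟧) := by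
  rw [PowerSeries.inv_eq_iff_mul_eq_one (by simp [zero_pow hs]), ← expand_apply s hs]
  simpa using congrArg (expand s hs) (mk_one_mul_one_sub_eq_one k)

/-- `subst (X ^ s)` is `expand s` without the proof of `s ≠ 0`, so that it can be used under
`∏ s ∈ Icc 1 g`. -/
noncomputable def yauZaslowTrunc (R : Type*) [CommRing R] (g : ℕ) : R⟦X⟧ :=
  ∏ s ∈ Icc 1 g, ((PowerSeries.mk 1 : R⟦X⟧).subst (X ^ s : R⟦X⟧)) ^ 24

lemma coeff_yauZaslowTrunc_eq_zero (h9 : (9 : R) = 0) {g : ℕ} (hg : g % 3 = 2) :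
    coeff g (yauZaslowTrunc R g) = 0 := by
  have h9' : (9 : R⟦X⟧) = 0 := by rw [← map_ofNat PowerSeries.C 9, h9, map_zero]
  rw [yauZaslowTrunc,
    prod_congr rfl fun s hs => subst_X_pow_mk_one_pow_twentyFour h9 (by simp at hs; omega),
    prod_mul_distrib, ← map_prod, prod_one_sub_three_mul h9']
  refine coeff_expand_mul_eq_zero _ _ _ fun j hj hdvd => ?_
  rw [map_sub, coeff_one, if_neg (by omega), ← map_ofNat PowerSeries.C 3, coeff_C_mul,
    coeff_sum_subst_chiSeries_eq_zero (by omega) hj, mul_zero, sub_zero]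

lemma map_yauZaslowTrunc {S : Type*} [CommRing S] (f : R →+* S) (g : ℕ) :
    map f (yauZaslowTrunc R g) = yauZaslowTrunc S g := by
  rw [yauZaslowTrunc, yauZaslowTrunc, map_prod]
  exact prod_congr rfl fun s hs => by
    rw [map_pow, map_subst_X_pow_mk_one f (by simp at hs; omega)]

lemma C_eq_coeff_yauZaslowTrunc (g : ℕ) : _root_.C g = coeff g (yauZaslowTrunc ℚ g) := by
  rw [_root_.C, yauZaslowTrunc]
  exact congrArg (coeff g) <| prod_congr rfl fun s hs => by
    rw [inv_one_sub_X_pow (by simp at hs; omega)]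

theorem stmt16 (g : ℕ) (hg : g % 3 = 2) : ∃ k : ℤ, _root_.C g = 9 * k := by
  set N : ℤ := coeff g (yauZaslowTrunc ℤ g)
  have hC : _root_.C g = N := by
    rw [C_eq_coeff_yauZaslowTrunc, ← map_yauZaslowTrunc (Int.castRingHom ℚ), coeff_map]
    rfl
  have hN : (N : ZMod 9) = 0 := by
    rw [← eq_intCast (Int.castRingHom (ZMod 9)), ← coeff_map, map_yauZaslowTrunc]
    exact coeff_yauZaslowTrunc_eq_zero (by decide) hg
  obtain ⟨k, hk⟩ := (ZMod.intCast_zmod_eq_zero_iff_dvd N 9).1 hN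
  exact ⟨k, by rw [hC, hk]; push_cast; ring⟩
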